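/- arXiv:2108.00479 — 2 statements merged into one kernel-verified Lean document; each statement's English description precedes it below -/
import Mathlib

section
/- Let n > 2k ≥ 4, X = {1,...,n}, x ∈ X, and let S_x be the family of all k-subsets of X containing x. Then the number of distinct intersections F ∩ F' over distinct F, F' ∈ S_x equals Σ_{i=0}^{k-2} C(n-1, i). -/
open Finset

/-- A family of finite sets is intersecting if any two members meet. -/
def Intersecting (F : Finset (Finset ℕ)) : Prop :=
  ∀ A ∈ F, ∀ B ∈ F, (A ∩ B).Nonempty

/-- `T` is a transversal of `F` inside `{1,…,n}` of size at most `k`. -/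
def Transversal (n k : ℕ) (F : Finset (Finset ℕ)) (T : Finset ℕ) : Prop :=
  T ⊆ Finset.Icc 1 n ∧ T.card ≤ k ∧ ∀ A ∈ F, (T ∩ A).Nonempty

/-- `B` is an inclusion-minimal transversal of `F`. -/
def MinTrans (n k : ℕ) (F : Finset (Finset ℕ)) (B : Finset ℕ) : Prop :=
  Transversal n k F B ∧ ∀ T, Transversal n k F T → T ⊆ B → T = B

/-- `F` is a saturated intersecting family of `k`-subsets of `{1,…,n}`. -/
def Saturated (n k : ℕ) (F : Finset (Finset ℕ)) : Prop :=
  Intersecting F ∧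
    ∀ G ∈ (Finset.Icc 1 n).powersetCard k, G ∉ F → ¬ Intersecting (insert G F)

/-- The family of distinct pairwise intersections of distinct members of `F`. -/
def interFam (F : Finset (Finset ℕ)) : Finset (Finset ℕ) :=
  ((F ×ˢ F).filter fun p => p.1 ≠ p.2).image fun p => p.1 ∩ p.2

/-! Every intersection of two distinct members of the star `S_x` is a proper subset `S ∋ x` of
a `k`-set, so `|S| < k`; conversely, when `n ≥ 2k - 1`, any such `S` is `(S ∪ A) ∩ (S ∪ B)` for
disjoint `A, B` of size `k - |S|` chosen outside `S`. Hence `I(S_x)` is the family of sets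
`{x} ∪ T` with `T ⊆ X \ {x}` and `|T| ≤ k - 2`, which is counted by the binomial sum. -/

theorem card_filter_powerset_card_lt {α : Type*} (s : Finset α) (m : ℕ) :
    #(s.powerset.filter (#· < m)) = ∑ i ∈ range m, (#s).choose i := by
  rw [card_eq_sum_card_fiberwise (f := card) (t := range m)
    fun t ht => mem_range.mpr (mem_filter.mp ht).2]
  refine sum_congr rfl fun i _ => ?_
  have hfiber : {t ∈ s.powerset.filter (#· < m) | #t = i} = s.powersetCard i := by
    ext t
    simp only [mem_filter, mem_powerset, mem_powersetCard]
    grind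
  rw [hfiber, card_powersetCard]

section

variable {α : Type*} [DecidableEq α]

theorem card_filter_mem_card_lt_powerset {U : Finset α} {x : α} (hx : x ∈ U) (k : ℕ) :
    #(U.powerset.filter fun S => x ∈ S ∧ #S < k) =
      #((U.erase x).powerset.filter (#· < k - 1)) := by
  refine card_nbij' (·.erase x) (insert x) ?_ ?_ ?_ ?_
  · intro S hS
    simp only [coe_filter, Set.mem_ofPred_eq, mem_powerset] at hS ⊢
    have := card_erase_of_mem hS.2.1
    have := card_pos.mpr ⟨x, hS.2.1⟩
    exact ⟨erase_subset_erase x hS.1, by omega⟩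
  · intro T hT
    simp only [coe_filter, Set.mem_ofPred_eq, mem_powerset, subset_erase] at hT ⊢
    have := card_insert_of_notMem hT.1.2
    exact ⟨insert_subset hx hT.1.1, mem_insert_self x T, by omega⟩
  · intro S hS
    simp only [coe_filter, Set.mem_ofPred_eq] at hS
    exact insert_erase hS.2.1
  · intro T hT
    simp only [coe_filter, Set.mem_ofPred_eq, mem_powerset, subset_erase] at hT
    exact erase_insert hT.1.2

theorem exists_disjoint_subsets_card_eq {R : Finset α} {m : ℕ} (h : 2 * m ≤ #R) :
    ∃ A ⊆ R, ∃ B ⊆ R, Disjoint A B ∧ #A = m ∧ #B = m := by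
  obtain ⟨A, hAR, hA⟩ := exists_subset_card_eq (s := R) (n := m) (by omega)
  obtain ⟨B, hBR, hB⟩ := exists_subset_card_eq (s := R \ A) (n := m)
    (by rw [card_sdiff_of_subset hAR]; omega)
  exact ⟨A, hAR, B, hBR.trans sdiff_subset, disjoint_of_subset_right hBR disjoint_sdiff, hA, hB⟩

theorem exists_card_eq_inter_eq {U S : Finset α} {k : ℕ} (hSU : S ⊆ U) (hSk : #S < k)
    (hU : 2 * k ≤ #U + #S) :
    ∃ F ⊆ U, ∃ F' ⊆ U, #F = k ∧ #F' = k ∧ F ≠ F' ∧ F ∩ F' = S := by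
  obtain ⟨A, hA, B, hB, hAB, hAcard, hBcard⟩ :=
    exists_disjoint_subsets_card_eq (R := U \ S) (m := k - #S)
      (by rw [card_sdiff_of_subset hSU]; omega)
  have hSA : Disjoint S A := disjoint_of_subset_right hA disjoint_sdiff
  have hSB : Disjoint S B := disjoint_of_subset_right hB disjoint_sdiff
  have hinter : (S ∪ A) ∩ (S ∪ B) = S := by
    rw [← union_inter_distrib_left, disjoint_iff_inter_eq_empty.mp hAB, union_empty]
  have hcardA : #(S ∪ A) = k := by rw [card_union_of_disjoint hSA]; omega
  refine ⟨S ∪ A, union_subset hSU (hA.trans sdiff_subset), S ∪ B,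
    union_subset hSU (hB.trans sdiff_subset), hcardA,
    by rw [card_union_of_disjoint hSB]; omega, fun h => ?_, hinter⟩
  rw [← h, inter_self] at hinter
  rw [hinter] at hcardA
  omega

end

theorem interFam_star {U : Finset ℕ} {x k : ℕ} (hU : 2 * k ≤ #U + 1) :
    interFam ((U.powersetCard k).filter (x ∈ ·)) =
      U.powerset.filter fun S => x ∈ S ∧ #S < k := by
  ext S
  simp only [interFam, mem_image, mem_filter, mem_product, mem_powerset, mem_powersetCard,
    Prod.exists]
  constructor
  · rintro ⟨F, F', ⟨⟨⟨⟨hFU, hF⟩, hxF⟩, ⟨-, hF'⟩, hxF'⟩, hne⟩, rfl⟩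
    have hssub : F ∩ F' ⊂ F := by
      refine inter_subset_left.ssubset_of_ne fun h => hne ?_
      exact eq_of_subset_of_card_le (h ▸ inter_subset_right) (by omega)
    exact ⟨inter_subset_left.trans hFU, mem_inter.mpr ⟨hxF, hxF'⟩, hF ▸ card_lt_card hssub⟩
  · rintro ⟨hSU, hxS, hSk⟩
    have hS : 1 ≤ #S := card_pos.mpr ⟨x, hxS⟩
    obtain ⟨F, hFU, F', hF'U, hF, hF', hne, hinter⟩ :=
      exists_card_eq_inter_eq hSU hSk (by omega)
    have hxF : x ∈ F ∩ F' := hinter ▸ hxS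
    exact ⟨F, F', ⟨⟨⟨⟨hFU, hF⟩, (mem_inter.mp hxF).1⟩, ⟨hF'U, hF'⟩, (mem_inter.mp hxF).2⟩,
      hne⟩, hinter⟩

theorem stmt_8_general (n k : ℕ) (hn : 2 * k < n) (x : ℕ)
    (hx : x ∈ Finset.Icc 1 n) :
    (interFam (((Finset.Icc 1 n).powersetCard k).filter
        (fun A => x ∈ A))).card =
      ∑ i ∈ Finset.range (k - 1), (n - 1).choose i := by
  have hcard : #(Icc 1 n) = n := by simp
  rw [interFam_star (by omega), card_filter_mem_card_lt_powerset hx,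
    card_filter_powerset_card_lt, card_erase_of_mem hx, hcard]

theorem stmt_8 (n k : ℕ) (hk : 2 ≤ k) (hn : 2 * k < n) (x : ℕ)
    (hx : x ∈ Finset.Icc 1 n) :
    (interFam (((Finset.Icc 1 n).powersetCard k).filter
        (fun A => x ∈ A))).card =
      ∑ i ∈ Finset.range (k - 1), (n - 1).choose i :=
  stmt_8_general n k hn x hx
end

section
/- Let n > 2k ≥ 4, x ∈ X = {1,...,n}, let S_x be the full star of k-subsets containing x, and let A be the family of k-subsets A with |A ∩ {1,2,3}| ≥ 2. Then |I(S_x)| < (2/3)·|I(A)|, where I(F) denotes the family of distinct pairwise intersections of distinct members of F. -/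
/-!
Two distinct members of the star `S_x` meet in a set of size `< k` containing `x`, and by symmetry
there are as many such small sets through `x` as through `1`; call this family `J₁`, and let `J₂`
be the small sets containing `2` but not `1`. The map `S ↦ (S \ {1}) ∪ {2}` from `J₁` to `J₂` is
at most two-to-one, so `|J₁| ≤ 2 |J₂|`. Conversely, as `n > 2k`, every set `S` of size `< k` that
meets `{1,2,3} = {c,d,e}` in `c` is the intersection of two `k`-sets extending `S ∪ {d}` and
`S ∪ {e}`, both in `A`. Hence `J₁`, `J₂` and `{3}` all lie in `I(A)`, and
`|I(S_x)| ≤ |J₁| ≤ (2/3)(|J₁| + |J₂|) < (2/3) |I(A)|`.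
-/

open Finset

section

variable {α : Type*} [DecidableEq α]

lemma card_inter_lt_of_ne {A B : Finset α} {k : ℕ} (hA : #A = k) (hB : #B = k) (hAB : A ≠ B) :
    #(A ∩ B) < k := by
  by_contra! h
  have hAB' : A ⊆ B := inter_eq_left.1 (eq_of_subset_of_card_le inter_subset_left (by omega))
  exact hAB (eq_of_subset_of_card_le hAB' (by omega))

lemma card_filter_mem_powerset_eq {U : Finset α} {a b : α} (k : ℕ) (ha : a ∈ U) (hb : b ∈ U) :
    #{S ∈ U.powerset | #S < k ∧ a ∈ S} = #{S ∈ U.powerset | #S < k ∧ b ∈ S} := by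
  suffices h : ∀ a ∈ U, ∀ b ∈ U,
      #{S ∈ U.powerset | #S < k ∧ a ∈ S} ≤ #{S ∈ U.powerset | #S < k ∧ b ∈ S} from
    le_antisymm (h a ha b hb) (h b hb a ha)
  intro a ha b hb
  let σ := Equiv.swap a b
  refine card_le_card_of_injOn (fun S => S.map σ.toEmbedding) ?_
    (map_injective σ.toEmbedding).injOn
  intro S hS
  simp only [coe_filter, mem_powerset, Set.mem_ofPred_eq] at hS ⊢
  refine ⟨?_, by simpa using hS.2.1, mem_map_equiv.2 (by simpa [σ] using hS.2.2)⟩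
  intro c hc
  rw [mem_map_equiv] at hc
  have hc' := hS.1 hc
  rw [Equiv.symm_swap, Equiv.swap_apply_def] at hc'
  split_ifs at hc' with hca hcb
  · exact hca ▸ ha
  · exact hcb ▸ hb
  · exact hc'

lemma card_filter_mem_powerset_le_two_mul {U : Finset α} {a b : α} (k : ℕ) (hab : a ≠ b)
    (hb : b ∈ U) :
    #{S ∈ U.powerset | #S < k ∧ a ∈ S} ≤ 2 * #{S ∈ U.powerset | #S < k ∧ a ∉ S ∧ b ∈ S} := by
  refine card_le_mul_card_image_of_maps_to (f := fun S => insert b (S.erase a)) ?_ 2 ?_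
  · intro S hS
    simp only [mem_filter, mem_powerset] at hS ⊢
    obtain ⟨hSU, hSk, haS⟩ := hS
    refine ⟨insert_subset hb ((erase_subset a S).trans hSU), ?_, by simp [hab], mem_insert_self b _⟩
    calc #(insert b (S.erase a)) ≤ #(S.erase a) + 1 := card_insert_le _ _
      _ = #S := card_erase_add_one haS
      _ < k := hSk
  · intro T _
    have hfiber : {S ∈ {S ∈ U.powerset | #S < k ∧ a ∈ S} | insert b (S.erase a) = T} ⊆
        {insert a T, insert a (T.erase b)} := by
      intro S hS
      simp only [mem_filter] at hS
      obtain ⟨⟨-, -, haS⟩, rfl⟩ := hS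
      rw [mem_insert, mem_singleton]
      by_cases hbS : b ∈ S
      · left
        rw [insert_eq_self.2 (mem_erase.2 ⟨hab.symm, hbS⟩), insert_erase haS]
      · right
        rw [erase_insert (fun h => hbS (mem_of_mem_erase h)), insert_erase haS]
    exact (card_le_card hfiber).trans card_le_two

lemma exists_supersets_card_eq_inter_eq {U P Q : Finset α} {k : ℕ} (hP : P ⊆ U) (hQ : Q ⊆ U)
    (hPk : #P ≤ k) (hQk : #Q ≤ k) (hU : 2 * k ≤ #U) :
    ∃ A B, P ⊆ A ∧ Q ⊆ B ∧ A ∈ U.powersetCard k ∧ B ∈ U.powersetCard k ∧ A ∩ B = P ∩ Q := by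
  -- Choose `A` avoiding `Q \ P`, then `B` avoiding `A \ Q`: this pins `A ∩ B` down to `P ∩ Q`.
  have hQP : #(U \ (Q \ P)) = #U - #(Q \ P) := card_sdiff_of_subset (sdiff_subset.trans hQ)
  have hQP_le : #(Q \ P) ≤ #Q := card_le_card sdiff_subset
  obtain ⟨A, hPA, hAU, hA⟩ := exists_subsuperset_card_eq (n := k) (t := U \ (Q \ P))
    (fun c hc => mem_sdiff.2 ⟨hP hc, fun h => (mem_sdiff.1 h).2 hc⟩) hPk (by omega)
  have hAQ : #(U \ (A \ Q)) = #U - #(A \ Q) :=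
    card_sdiff_of_subset (sdiff_subset.trans (hAU.trans sdiff_subset))
  have hAQ_le : #(A \ Q) ≤ #A := card_le_card sdiff_subset
  obtain ⟨B, hQB, hBU, hB⟩ := exists_subsuperset_card_eq (n := k) (t := U \ (A \ Q))
    (fun c hc => mem_sdiff.2 ⟨hQ hc, fun h => (mem_sdiff.1 h).2 hc⟩) hQk (by omega)
  refine ⟨A, B, hPA, hQB, mem_powersetCard.2 ⟨hAU.trans sdiff_subset, hA⟩,
    mem_powersetCard.2 ⟨hBU.trans sdiff_subset, hB⟩, ?_⟩
  ext c
  simp only [mem_inter]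
  constructor
  · rintro ⟨hcA, hcB⟩
    have hcQ : c ∈ Q := by_contra fun h => (mem_sdiff.1 (hBU hcB)).2 (mem_sdiff.2 ⟨hcA, h⟩)
    have hcP : c ∈ P := by_contra fun h => (mem_sdiff.1 (hAU hcA)).2 (mem_sdiff.2 ⟨hcQ, h⟩)
    exact ⟨hcP, hcQ⟩
  · rintro ⟨hcP, hcQ⟩
    exact ⟨hPA hcP, hQB hcQ⟩

end

lemma mem_interFam {F : Finset (Finset ℕ)} {S : Finset ℕ} :
    S ∈ interFam F ↔ ∃ A ∈ F, ∃ B ∈ F, A ≠ B ∧ A ∩ B = S := by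
  simp only [interFam, mem_image, mem_filter, mem_product, Prod.exists]
  constructor
  · rintro ⟨A, B, ⟨⟨hA, hB⟩, hAB⟩, rfl⟩
    exact ⟨A, hA, B, hB, hAB, rfl⟩
  · rintro ⟨A, hA, B, hB, hAB, rfl⟩
    exact ⟨A, B, ⟨⟨hA, hB⟩, hAB⟩, rfl⟩

lemma interFam_filter_mem_subset (U : Finset ℕ) (k x : ℕ) :
    interFam {A ∈ U.powersetCard k | x ∈ A} ⊆ {S ∈ U.powerset | #S < k ∧ x ∈ S} := by
  intro S hS
  obtain ⟨A, hA, B, hB, hAB, rfl⟩ := mem_interFam.1 hS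
  simp only [mem_filter, mem_powersetCard, mem_powerset] at hA hB ⊢
  exact ⟨inter_subset_left.trans hA.1.1, card_inter_lt_of_ne hA.1.2 hB.1.2 hAB,
    mem_inter.2 ⟨hA.2, hB.2⟩⟩

lemma inter_mem_interFam_filter {U P Q : Finset ℕ} {k : ℕ} {p : Finset ℕ → Prop}
    [DecidablePred p] (hp : Monotone p) (hP : P ⊆ U) (hQ : Q ⊆ U) (hPk : #P ≤ k) (hQk : #Q ≤ k)
    (hU : 2 * k ≤ #U) (hPQ : #(P ∩ Q) < k) (hpP : p P) (hpQ : p Q) :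
    P ∩ Q ∈ interFam {A ∈ U.powersetCard k | p A} := by
  obtain ⟨A, B, hPA, hQB, hA, hB, hAB⟩ := exists_supersets_card_eq_inter_eq hP hQ hPk hQk hU
  refine mem_interFam.2 ⟨A, mem_filter.2 ⟨hA, hp hPA hpP⟩, B, mem_filter.2 ⟨hB, hp hQB hpQ⟩,
    fun h => ?_, hAB⟩
  rw [← h, inter_self] at hAB
  have := (mem_powersetCard.1 hA).2
  rw [← hAB] at hPQ
  omega

lemma mem_interFam_of_inter_nonempty {U T S : Finset ℕ} {k : ℕ} (hTU : T ⊆ U) (hT : #T = 3)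
    (hU : 2 * k ≤ #U) (hSU : S ⊆ U) (hSk : #S < k) (hST : (S ∩ T).Nonempty) :
    S ∈ interFam {A ∈ U.powersetCard k | 2 ≤ #(A ∩ T)} := by
  obtain ⟨c, hc⟩ := hST
  obtain ⟨hcS, hcT⟩ := mem_inter.1 hc
  obtain ⟨d, e, hde, hTc⟩ := card_eq_two.1 (show #(T.erase c) = 2 by rw [card_erase_of_mem hcT, hT])
  have hd : d ∈ T.erase c := hTc ▸ mem_insert_self d {e}
  have he : e ∈ T.erase c := hTc ▸ mem_insert_of_mem (mem_singleton_self e)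
  rw [mem_erase] at hd he
  have hPQ : insert d S ∩ insert e S = S := by
    ext y
    simp only [mem_inter, mem_insert]
    grind
  have hpair {f : ℕ} (hcf : f ≠ c) (hfT : f ∈ T) : 2 ≤ #(insert f S ∩ T) := by
    calc 2 = #{c, f} := (card_pair hcf.symm).symm
      _ ≤ #(insert f S ∩ T) := card_le_card (by
          intro y hy
          simp only [mem_insert, mem_singleton] at hy
          rcases hy with rfl | rfl
          · exact mem_inter.2 ⟨mem_insert_of_mem hcS, hcT⟩
          · exact mem_inter.2 ⟨mem_insert_self _ _, hfT⟩)
  have hmono : Monotone fun A : Finset ℕ => 2 ≤ #(A ∩ T) :=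
    fun A B hAB h => h.trans (card_le_card (inter_subset_inter_right hAB))
  have := inter_mem_interFam_filter hmono (insert_subset (hTU hd.2) hSU)
    (insert_subset (hTU he.2) hSU) ((card_insert_le _ _).trans hSk)
    ((card_insert_le _ _).trans hSk) hU (by rwa [hPQ]) (hpair hd.1 hd.2) (hpair he.1 he.2)
  rwa [hPQ] at this

lemma card_add_card_lt_card_interFam {U T : Finset ℕ} {k a b c : ℕ} (hk : 2 ≤ k)
    (hTU : T ⊆ U) (hT : #T = 3) (hU : 2 * k ≤ #U) (ha : a ∈ T) (hb : b ∈ T) (hc : c ∈ T)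
    (hca : c ≠ a) (hcb : c ≠ b) :
    #{S ∈ U.powerset | #S < k ∧ a ∈ S} + #{S ∈ U.powerset | #S < k ∧ a ∉ S ∧ b ∈ S} <
      #(interFam {A ∈ U.powersetCard k | 2 ≤ #(A ∩ T)}) := by
  set J₁ := {S ∈ U.powerset | #S < k ∧ a ∈ S}
  set J₂ := {S ∈ U.powerset | #S < k ∧ a ∉ S ∧ b ∈ S}
  have hc₁₂ : {c} ∉ J₁ ∪ J₂ := by simp [J₁, J₂, hca.symm, hcb.symm]
  have hdisj : Disjoint J₁ J₂ := disjoint_filter.2 fun S _ h₁ h₂ => h₂.2.1 h₁.2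
  rw [← card_union_of_disjoint hdisj, Nat.lt_iff_add_one_le, ← card_insert_of_notMem hc₁₂]
  refine card_le_card fun S hS => ?_
  obtain ⟨hSU, hSk, hST⟩ : S ⊆ U ∧ #S < k ∧ (S ∩ T).Nonempty := by
    rcases mem_insert.1 hS with rfl | hS
    · exact ⟨singleton_subset_iff.2 (hTU hc), by rw [card_singleton]; omega, c,
        mem_inter.2 ⟨mem_singleton_self c, hc⟩⟩
    simp only [mem_union, mem_filter, mem_powerset, J₁, J₂] at hS
    rcases hS with ⟨hSU, hSk, haS⟩ | ⟨hSU, hSk, -, hbS⟩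
    · exact ⟨hSU, hSk, a, mem_inter.2 ⟨haS, ha⟩⟩
    · exact ⟨hSU, hSk, b, mem_inter.2 ⟨hbS, hb⟩⟩
  exact mem_interFam_of_inter_nonempty hTU hT hU hSU hSk hST

theorem stmt_10 (n k : ℕ) (hk : 2 ≤ k) (hn : 2 * k < n) (x : ℕ)
    (hx : x ∈ Finset.Icc 1 n) :
    ((interFam (((Finset.Icc 1 n).powersetCard k).filter
        (fun A => x ∈ A))).card : ℚ) <
      (2 / 3 : ℚ) * (interFam (((Finset.Icc 1 n).powersetCard k).filter
        (fun A => 2 ≤ (A ∩ ({1, 2, 3} : Finset ℕ)).card))).card := by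
  set U := Finset.Icc 1 n
  set T : Finset ℕ := {1, 2, 3}
  have hTU : T ⊆ U := by
    intro y hy
    simp only [T, mem_insert, mem_singleton] at hy
    simp only [U, mem_Icc]
    omega
  have hU : 2 * k ≤ #U := by simp only [U, Nat.card_Icc]; omega
  have h₁ : 1 ∈ T := by simp [T]
  have h₂ : 2 ∈ T := by simp [T]
  have hstar := (card_le_card (interFam_filter_mem_subset U k x)).trans
    (card_filter_mem_powerset_eq k hx (hTU h₁)).le
  have hdouble := card_filter_mem_powerset_le_two_mul k (by norm_num : (1 : ℕ) ≠ 2) (hTU h₂)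
  have hcover := card_add_card_lt_card_interFam (c := 3) hk hTU rfl hU h₁ h₂ (by simp [T])
    (by norm_num) (by norm_num)
  have hcount : (3 : ℚ) * #(interFam {A ∈ U.powersetCard k | x ∈ A}) <
      2 * #(interFam {A ∈ U.powersetCard k | 2 ≤ #(A ∩ T)}) := by
    exact_mod_cast (by omega)
  linarith
end
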